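/- arXiv:1608.06663 — 3 statements merged into one kernel-verified Lean document; each statement's English description precedes it below -/
import Mathlib

section
/- (Sandwich variance formula.) The variance of the misspecified MLE satisfies Var(θ̂_n) = (2 (θ†)² / n) · (1 − ([J]/(T θ†))²) + O(n^{-2}) as n → ∞; that is, there exist a constant C and N such that for all n ≥ N, |Var(θ̂_n) − (2(θ†)²/n)(1 − ([J]/(Tθ†))²)| ≤ C n^{-2}. -/
/-!
For `X ~ N(m, v)` one has `Var(X²) = E X⁴ - (E X²)² = 2 v² + 4 m² v`, the moments coming from the
central Gaussian moments `E Z² = v`, `E Z³ = 0`, `E Z⁴ = 3 v²` (Gamma integrals). By independence,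
`Var(θ̂_n) = T⁻² ∑ᵢ (2 v² + 4 mᵢ² v)` with `v = θ* Δ_n` and `mᵢ = β* Δ_n + μᵢ`. Only the `K` jump
indices carry a nonzero `μᵢ`, so `∑ μᵢ = ∑ c_j` and `∑ μᵢ² = [J]`, and the exact variance is
`2 θ*² / n + 4 θ* [J] / (T n) + (4 θ* β*² T + 8 θ* β* ∑ c_j) / n²`; the first two terms are exactly
`(2 θ†² / n) (1 - ([J] / (T θ†))²)`.
-/

open MeasureTheory ProbabilityTheory Real
open scoped NNReal Nat

lemma integral_pow_two_mul_mul_exp_neg_mul_sq {b : ℝ} (hb : 0 < b) (k : ℕ) :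
    ∫ x : ℝ, x ^ (2 * k) * exp (-b * x ^ 2) = b ^ (-(2 * k + 1 : ℝ) / 2) * Gamma (k + 1 / 2) := by
  have hIoi := integral_rpow_mul_exp_neg_mul_rpow (p := 2) (q := ((2 * k : ℕ) : ℝ)) two_pos
    (neg_one_lt_zero.trans_le (Nat.cast_nonneg _)) hb
  rw [show (2 : ℝ) = ((2 : ℕ) : ℝ) by norm_num] at hIoi
  simp only [rpow_natCast] at hIoi
  have heven := integral_comp_abs (f := fun x : ℝ => x ^ (2 * k) * exp (-b * x ^ 2))
  simp only [(even_two_mul k).pow_abs, sq_abs] at heven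
  rw [heven, hIoi]
  push_cast
  ring_nf

lemma integral_pow_two_mul_gaussianReal_zero (v : ℝ≥0) (k : ℕ) :
    ∫ x, x ^ (2 * k) ∂gaussianReal 0 v = (2 * k - 1 : ℕ)‼ * (v : ℝ) ^ k := by
  rcases eq_or_ne v 0 with rfl | hv
  · cases k <;> simp [gaussianReal_zero_var]
  have hb : 0 < (2 * v : ℝ)⁻¹ := by positivity
  calc ∫ x, x ^ (2 * k) ∂gaussianReal 0 v
      = (√(2 * π * v))⁻¹ * ∫ x : ℝ, x ^ (2 * k) * exp (-(2 * v : ℝ)⁻¹ * x ^ 2) := by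
        rw [integral_gaussianReal_eq_integral_smul hv, ← integral_const_mul]
        congr 1 with x
        rw [gaussianPDFReal, smul_eq_mul, sub_zero, div_eq_inv_mul]
        ring_nf
    _ = (√(2 * π * v))⁻¹ * ((2 * v) ^ k * √(2 * v)) * Gamma (k + 1 / 2) := by
        rw [integral_pow_two_mul_mul_exp_neg_mul_sq hb, inv_rpow (by positivity),
          ← rpow_neg (by positivity), neg_div, neg_neg,
          show (2 * k + 1 : ℝ) / 2 = k + 1 / 2 by ring, rpow_add (by positivity),
          ← sqrt_eq_rpow, rpow_natCast]
        ring
    _ = (2 * k - 1 : ℕ)‼ * (v : ℝ) ^ k := by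
        rw [Gamma_nat_add_half, sqrt_mul (by positivity), sqrt_mul (by positivity),
          sqrt_mul (by positivity), mul_pow]
        field_simp

lemma integral_pow_gaussianReal_zero_of_odd (v : ℝ≥0) {k : ℕ} (hk : Odd k) :
    ∫ x, x ^ k ∂gaussianReal 0 v = 0 := by
  have h : ∫ x, x ^ k ∂gaussianReal 0 v = ∫ x, (-x) ^ k ∂gaussianReal 0 v := by
    conv_lhs => rw [← neg_zero, ← gaussianReal_map_neg]
    exact integral_map (by fun_prop) (by fun_prop)
  simp only [hk.neg_pow, integral_neg] at h
  linarith

lemma integrable_pow_gaussianReal (m : ℝ) (v : ℝ≥0) (k : ℕ) :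
    Integrable (fun x => x ^ k) (gaussianReal m v) :=
  (memLp_id_gaussianReal k).integrable_norm_pow'.mono' (by fun_prop)
    (ae_of_all _ fun x => by simp [norm_pow])

lemma integral_pow_gaussianReal (m : ℝ) (v : ℝ≥0) (n : ℕ) :
    ∫ x, x ^ n ∂gaussianReal m v =
      ∑ j ∈ Finset.range (n + 1), (∫ x, x ^ j ∂gaussianReal 0 v) * m ^ (n - j) * n.choose j := by
  have h : ∫ x, x ^ n ∂gaussianReal m v = ∫ x, (x + m) ^ n ∂gaussianReal 0 v := by
    conv_lhs => rw [← zero_add m, ← gaussianReal_map_add_const]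
    exact integral_map (by fun_prop) (by fun_prop)
  simp_rw [h, add_pow]
  rw [integral_finsetSum _
    fun j _ => ((integrable_pow_gaussianReal 0 v j).mul_const _).mul_const _]
  simp_rw [integral_mul_const]

lemma integral_sq_gaussianReal (m : ℝ) (v : ℝ≥0) :
    ∫ x, x ^ 2 ∂gaussianReal m v = m ^ 2 + v := by
  have h2 := integral_pow_two_mul_gaussianReal_zero v 1
  rw [integral_pow_gaussianReal]
  simp [Finset.sum_range_succ, h2]

lemma integral_pow_four_gaussianReal (m : ℝ) (v : ℝ≥0) :
    ∫ x, x ^ 4 ∂gaussianReal m v = m ^ 4 + 6 * m ^ 2 * v + 3 * v ^ 2 := by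
  have h2 := integral_pow_two_mul_gaussianReal_zero v 1
  have h3 := integral_pow_gaussianReal_zero_of_odd v (by decide : Odd 3)
  have h4 := integral_pow_two_mul_gaussianReal_zero v 2
  rw [integral_pow_gaussianReal]
  simp [Finset.sum_range_succ, h2, h3, h4, Nat.choose, mul_comm, mul_assoc]

lemma memLp_sq_gaussianReal (m : ℝ) (v : ℝ≥0) :
    MemLp (fun x => x ^ 2) 2 (gaussianReal m v) :=
  (memLp_two_iff_integrable_sq (by fun_prop)).2
    (by simpa only [← pow_mul] using integrable_pow_gaussianReal m v 4)

lemma variance_sq_gaussianReal (m : ℝ) (v : ℝ≥0) :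
    Var[fun x => x ^ 2; gaussianReal m v] = 2 * v ^ 2 + 4 * m ^ 2 * v := by
  rw [variance_eq_sub (memLp_sq_gaussianReal m v)]
  simp only [Pi.pow_apply, ← pow_mul, integral_pow_four_gaussianReal, integral_sq_gaussianReal]
  ring

lemma variance_const_mul_sum_sq_of_iIndepFun {Ω ι : Type*} [MeasurableSpace Ω] {P : Measure Ω}
    [IsProbabilityMeasure P] [Fintype ι] {X : ι → Ω → ℝ} (hX : ∀ i, Measurable (X i))
    (hindep : iIndepFun X P) {m : ι → ℝ} {v : ℝ≥0}
    (hlaw : ∀ i, P.map (X i) = gaussianReal (m i) v) (a : ℝ) :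
    Var[fun ω => a * ∑ i, X i ω ^ 2; P] = a ^ 2 * ∑ i, (2 * v ^ 2 + 4 * m i ^ 2 * v) := by
  have hsum : (fun ω => ∑ i, X i ω ^ 2) = ∑ i, fun ω => X i ω ^ 2 := by
    ext ω; simp
  rw [variance_const_mul, hsum, IndepFun.variance_sum (X := fun i ω => X i ω ^ 2)
    (fun i _ => (memLp_sq_gaussianReal (m i) v).comp_measurePreserving ⟨hX i, hlaw i⟩)
    fun i _ j _ hij =>
      (hindep.indepFun hij).comp (measurable_id.pow_const 2) (measurable_id.pow_const 2)]
  simp_rw [MeasurePreserving.variance_fun_comp (f := fun x => x ^ 2) ⟨hX _, hlaw _⟩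
    (by fun_prop), variance_sq_gaussianReal]

lemma sum_variance_sq_eq {ι : Type*} [Fintype ι] (μ : ι → ℝ) (a v : ℝ) :
    ∑ i, (2 * v ^ 2 + 4 * (a + μ i) ^ 2 * v) =
      Fintype.card ι * (2 * v ^ 2 + 4 * a ^ 2 * v) + 8 * a * v * ∑ i, μ i
        + 4 * v * ∑ i, μ i ^ 2 := by
  have hexpand : ∀ i, 2 * v ^ 2 + 4 * (a + μ i) ^ 2 * v
      = (2 * v ^ 2 + 4 * a ^ 2 * v) + 8 * a * v * μ i + 4 * v * μ i ^ 2 := fun i => by ring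
  simp only [hexpand, Finset.sum_add_distrib, ← Finset.mul_sum, Finset.sum_const,
    Finset.card_univ, nsmul_eq_mul]
  ring

lemma sandwich_variance_sub_eq {T θ β S J n : ℝ} (hT : T ≠ 0) (hn : n ≠ 0)
    (hθ : T * θ + J ≠ 0) :
    T⁻¹ ^ 2 * (n * (2 * (θ * (T / n)) ^ 2 + 4 * (β * (T / n)) ^ 2 * (θ * (T / n)))
        + 8 * (β * (T / n)) * (θ * (T / n)) * S + 4 * (θ * (T / n)) * J)
      - 2 * (θ + T⁻¹ * J) ^ 2 / n * (1 - (J / (T * (θ + T⁻¹ * J))) ^ 2)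
      = (4 * θ * β ^ 2 * T + 8 * θ * β * S) / n ^ 2 := by
  have hθ' : θ + T⁻¹ * J ≠ 0 := by
    rwa [← mul_ne_zero_iff_left hT, mul_add, mul_inv_cancel_left₀ hT]
  field_simp
  ring

theorem mle_sandwich_variance_general
    {Ω : Type*} [MeasurableSpace Ω] (P : Measure Ω) [IsProbabilityMeasure P]
    (T βs θs : ℝ) (hT : 0 < T) (hθs : 0 < θs)
    (K : ℕ) (c : Fin K → ℝ)
    (D : (n : ℕ) → Fin n → Ω → ℝ) (hDmeas : ∀ n i, Measurable (D n i))
    (μf : (n : ℕ) → Fin n → ℝ)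
    (hjump : ∀ n, K < n → ∃ jdx : Fin K → Fin n, Function.Injective jdx ∧
      (∀ k, μf n (jdx k) = c k) ∧ ∀ i, i ∉ Set.range jdx → μf n i = 0)
    (hindep : ∀ n, K < n → iIndepFun (D n) P)
    (hdist : ∀ n, K < n → ∀ i : Fin n,
      P.map (D n i) = gaussianReal (βs * (T / n) + μf n i) (Real.toNNReal (θs * (T / n)))) :
    ∃ (C : ℝ) (N : ℕ), ∀ n ≥ N,
      |variance (fun ω => T⁻¹ * ∑ i, (D n i ω) ^ 2) P
          - (2 * (θs + T⁻¹ * ∑ k, (c k) ^ 2) ^ 2 / n)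
            * (1 - ((∑ k, (c k) ^ 2) / (T * (θs + T⁻¹ * ∑ k, (c k) ^ 2))) ^ 2)|
        ≤ C / (n : ℝ) ^ 2 := by
  set J := ∑ k, c k ^ 2
  set S := ∑ k, c k
  refine ⟨|4 * θs * βs ^ 2 * T + 8 * θs * βs * S|, K + 1, fun n hKn => ?_⟩
  have hn : (0 : ℝ) < n := by exact_mod_cast K.zero_le.trans_lt hKn
  obtain ⟨jdx, hinj, hjc, hj0⟩ := hjump n hKn
  have hS : ∑ i, μf n i = S :=
    (Fintype.sum_of_injective jdx hinj c _ hj0 fun k => (hjc k).symm).symm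
  have hJ : ∑ i, μf n i ^ 2 = J :=
    (Fintype.sum_of_injective jdx hinj _ _ (fun i hi => by simp [hj0 i hi])
      fun k => by rw [hjc]).symm
  rw [variance_const_mul_sum_sq_of_iIndepFun (hDmeas n) (hindep n hKn) (hdist n hKn),
    Real.coe_toNNReal _ (by positivity), sum_variance_sq_eq, hS, hJ, Fintype.card_fin,
    sandwich_variance_sub_eq hT.ne' hn.ne' (by positivity), abs_div,
    abs_of_pos (by positivity : (0 : ℝ) < n ^ 2)]

/-- **Sandwich variance formula for the misspecified MLE.**
With `θ̂_n = T⁻¹ ∑_i D_i²` and `θ† = θ* + T⁻¹ [J]`,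
`Var(θ̂_n) = (2 (θ†)²/n) (1 − ([J]/(T θ†))²) + O(n^{-2})`. -/
theorem mle_sandwich_variance
    {Ω : Type*} [MeasurableSpace Ω] (P : Measure Ω) [IsProbabilityMeasure P]
    (T βs θs : ℝ) (hT : 0 < T) (hθs : 0 < θs)
    (K : ℕ) (c : Fin K → ℝ) (hc : ∀ k, c k ≠ 0)
    (D : (n : ℕ) → Fin n → Ω → ℝ) (hDmeas : ∀ n i, Measurable (D n i))
    (μf : (n : ℕ) → Fin n → ℝ)
    (hjump : ∀ n, K < n → ∃ jdx : Fin K → Fin n, Function.Injective jdx ∧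
      (∀ k, μf n (jdx k) = c k) ∧ ∀ i, i ∉ Set.range jdx → μf n i = 0)
    (hindep : ∀ n, K < n → iIndepFun (D n) P)
    (hdist : ∀ n, K < n → ∀ i : Fin n,
      P.map (D n i) = gaussianReal (βs * (T / n) + μf n i) (Real.toNNReal (θs * (T / n)))) :
    ∃ (C : ℝ) (N : ℕ), ∀ n ≥ N,
      |variance (fun ω => T⁻¹ * ∑ i, (D n i ω) ^ 2) P
          - (2 * (θs + T⁻¹ * ∑ k, (c k) ^ 2) ^ 2 / n)
            * (1 - ((∑ k, (c k) ^ 2) / (T * (θs + T⁻¹ * ∑ k, (c k) ^ 2))) ^ 2)|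
        ≤ C / (n : ℝ) ^ 2 :=
  mle_sandwich_variance_general P T βs θs hT hθs K c D hDmeas μf hjump hindep hdist
end

section
/- (Consistency of the misspecified MLE.) As n → ∞, θ̂_n converges to θ† = θ* + T^{-1}[J] in L² (i.e., E[(θ̂_n − θ†)²] → 0) and hence in probability. -/
/-!
Each `D_i` is Gaussian with variance `v = θ* Δ_n` and mean `m_i = β* Δ_n + μ_i`, so
`E[D_i²] = v + m_i²` and, writing `D_i = m_i + √v Z` with `Z` standard normal,
`Var[D_i²] ≤ 2 v² E[Z⁴] + 8 m_i² v`. Summing, independence gives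
`E[θ̂_n] = θ* + T⁻¹ Σ m_i² = θ† + O(Δ_n)` (only the `K` jumps survive in `Σ m_i²`) and
`Var[θ̂_n] = O(Δ_n)`, so the mean squared error `Var[θ̂_n] + (E[θ̂_n] - θ†)²` tends to `0`;
Chebyshev turns `L²` convergence into convergence in probability.
-/

open MeasureTheory ProbabilityTheory Filter
open scoped NNReal Topology

namespace ProbabilityTheory

lemma integral_sub_const_sq_eq_variance_add {Ω : Type*} [MeasurableSpace Ω] {P : Measure Ω}
    [IsProbabilityMeasure P] {Y : Ω → ℝ} (hY : MemLp Y 2 P) (c : ℝ) :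
    ∫ ω, (Y ω - c) ^ 2 ∂P = Var[Y; P] + (∫ ω, Y ω ∂P - c) ^ 2 := by
  have h := variance_eq_sub (hY.sub (memLp_const c))
  rw [show Y - (fun _ => c) = fun ω => Y ω - c from rfl,
    variance_sub_const hY.aestronglyMeasurable, integral_sub (hY.integrable one_le_two)
      (integrable_const c), integral_const] at h
  simp only [Pi.pow_apply, probReal_univ, smul_eq_mul, one_mul] at h
  linarith

section Gaussian

variable {m : ℝ} {v : ℝ≥0}

lemma integrable_pow_gaussianReal (p : ℕ) : Integrable (fun x => x ^ p) (gaussianReal m v) := by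
  refine (memLp_id_gaussianReal (μ := m) (v := v) p).integrable_norm_pow'.mono' (by fun_prop) ?_
  exact ae_of_all _ fun x => by simp

lemma memLp_sq_gaussianReal : MemLp (fun x => x ^ 2) 2 (gaussianReal m v) :=
  (memLp_two_iff_integrable_sq (by fun_prop)).2 <| by
    simpa [← pow_mul] using integrable_pow_gaussianReal (m := m) (v := v) 4

lemma integral_sq_gaussianReal : ∫ x, x ^ 2 ∂gaussianReal m v = v + m ^ 2 := by
  have h := variance_eq_sub (memLp_id_gaussianReal (μ := m) (v := v) 2)
  simp only [variance_id_gaussianReal, Pi.pow_apply, id_eq] at h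
  rw [integral_id_gaussianReal] at h
  linarith

lemma integral_pow_gaussianReal_zero (p : ℕ) :
    ∫ x, x ^ p ∂gaussianReal 0 v = √(v : ℝ) ^ p * ∫ x, x ^ p ∂gaussianReal 0 1 := by
  have hmap : (gaussianReal 0 1).map (√(v : ℝ) * ·) = gaussianReal 0 v := by
    rw [gaussianReal_map_const_mul, mul_zero, mul_one]
    congr
    simp
  rw [← hmap, integral_map (by fun_prop) (by fun_prop), ← integral_const_mul]
  simp_rw [mul_pow]

lemma variance_sq_gaussianReal_le :
    Var[fun x => x ^ 2; gaussianReal m v]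
      ≤ 2 * v ^ 2 * ∫ x, x ^ 4 ∂gaussianReal 0 1 + 8 * m ^ 2 * v := by
  have hmap : (gaussianReal 0 v).map (· + m) = gaussianReal m v := by
    rw [gaussianReal_map_add_const, zero_add]
  have h4 : ∫ y, y ^ 4 ∂gaussianReal 0 v = v ^ 2 * ∫ x, x ^ 4 ∂gaussianReal 0 1 := by
    rw [integral_pow_gaussianReal_zero, show (4 : ℕ) = 2 * 2 from rfl, pow_mul,
      Real.sq_sqrt v.coe_nonneg]
  have h2 : ∫ y, y ^ 2 ∂gaussianReal 0 v = v := by simp [integral_sq_gaussianReal]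
  calc Var[fun x => x ^ 2; gaussianReal m v]
      = Var[fun x => x ^ 2 - m ^ 2; gaussianReal m v] :=
        (variance_sub_const (by fun_prop) _).symm
    _ ≤ ∫ x, (x ^ 2 - m ^ 2) ^ 2 ∂gaussianReal m v :=
        variance_le_expectation_sq (by fun_prop)
    _ = ∫ y, (y ^ 2 + 2 * m * y) ^ 2 ∂gaussianReal 0 v := by
        rw [← hmap, integral_map (by fun_prop) (by fun_prop)]
        congr with y
        ring
    _ ≤ ∫ y, (2 * y ^ 4 + 8 * m ^ 2 * y ^ 2) ∂gaussianReal 0 v := by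
        refine integral_mono ?_ ?_ fun y => ?_
        · exact (memLp_sq_gaussianReal.add
            ((memLp_id_gaussianReal 2).const_mul (2 * m))).integrable_sq
        · exact ((integrable_pow_gaussianReal 4).const_mul 2).add
            ((integrable_pow_gaussianReal 2).const_mul _)
        · nlinarith [sq_nonneg (y ^ 2 - 2 * m * y)]
    _ = 2 * v ^ 2 * ∫ x, x ^ 4 ∂gaussianReal 0 1 + 8 * m ^ 2 * v := by
        rw [integral_add, integral_const_mul, integral_const_mul, h4, h2]
        · ring
        · exact (integrable_pow_gaussianReal 4).const_mul 2
        · exact (integrable_pow_gaussianReal 2).const_mul _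

end Gaussian

section SumOfSquares

variable {Ω ι : Type*} [MeasurableSpace Ω] {P : Measure Ω} [Fintype ι]
  {X : ι → Ω → ℝ} {m : ι → ℝ} {v : ℝ≥0}

lemma HasLaw.memLp_sq_of_gaussianReal {Y : Ω → ℝ} {a : ℝ} (hY : HasLaw Y (gaussianReal a v) P) :
    MemLp (fun ω => Y ω ^ 2) 2 P := by
  have h := memLp_sq_gaussianReal (m := a) (v := v)
  rwa [← hY.map_eq, memLp_map_measure_iff (by fun_prop) hY.aemeasurable] at h

lemma memLp_sum_sq_of_hasLaw_gaussianReal (hX : ∀ i, HasLaw (X i) (gaussianReal (m i) v) P) :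
    MemLp (fun ω => ∑ i, X i ω ^ 2) 2 P :=
  memLp_finsetSum _ fun i _ => (hX i).memLp_sq_of_gaussianReal

lemma integral_sum_sq_of_hasLaw_gaussianReal [IsFiniteMeasure P]
    (hX : ∀ i, HasLaw (X i) (gaussianReal (m i) v) P) :
    ∫ ω, ∑ i, X i ω ^ 2 ∂P = Fintype.card ι * v + ∑ i, m i ^ 2 := by
  rw [integral_finsetSum _ fun i _ => (hX i).memLp_sq_of_gaussianReal.integrable one_le_two]
  have h : ∀ i, ∫ ω, X i ω ^ 2 ∂P = v + m i ^ 2 := fun i => by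
    rw [← integral_sq_gaussianReal, ← (hX i).integral_comp (by fun_prop)]
    rfl
  simp [h, Finset.sum_add_distrib]

lemma variance_sum_sq_le_of_hasLaw_gaussianReal
    (hX : ∀ i, HasLaw (X i) (gaussianReal (m i) v) P) (hindep : iIndepFun X P) :
    Var[fun ω => ∑ i, X i ω ^ 2; P]
      ≤ 2 * Fintype.card ι * v ^ 2 * (∫ x, x ^ 4 ∂gaussianReal 0 1) + 8 * v * ∑ i, m i ^ 2 := by
  have hsq : iIndepFun (fun i ω => X i ω ^ 2) P :=
    hindep.comp (fun _ x => x ^ 2) fun _ => by fun_prop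
  have hvar : ∀ i, Var[fun ω => X i ω ^ 2; P] = Var[fun x => x ^ 2; gaussianReal (m i) v] := by
    intro i
    rw [← (hX i).map_eq, variance_map (by fun_prop) (hX i).aemeasurable]
    rfl
  calc Var[fun ω => ∑ i, X i ω ^ 2; P]
      = ∑ i, Var[fun ω => X i ω ^ 2; P] := by
        rw [← IndepFun.variance_sum (fun i _ => (hX i).memLp_sq_of_gaussianReal)
          fun i _ j _ hij => hsq.indepFun hij]
        congr with ω
        simp
    _ ≤ ∑ i, (2 * v ^ 2 * (∫ x, x ^ 4 ∂gaussianReal 0 1) + 8 * m i ^ 2 * v) :=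
        Finset.sum_le_sum fun i _ => (hvar i).trans_le variance_sq_gaussianReal_le
    _ = _ := by
        rw [Finset.sum_add_distrib, Finset.sum_const, Finset.card_univ, nsmul_eq_mul,
          ← Finset.sum_mul, ← Finset.mul_sum]
        ring

lemma integral_mul_sum_sq_sub_sq_le [IsProbabilityMeasure P]
    (hX : ∀ i, HasLaw (X i) (gaussianReal (m i) v) P) (hindep : iIndepFun X P) (a c : ℝ) :
    ∫ ω, (a * ∑ i, X i ω ^ 2 - c) ^ 2 ∂P
      ≤ a ^ 2 * (2 * Fintype.card ι * v ^ 2 * (∫ x, x ^ 4 ∂gaussianReal 0 1)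
          + 8 * v * ∑ i, m i ^ 2)
        + (a * (Fintype.card ι * v + ∑ i, m i ^ 2) - c) ^ 2 := by
  rw [integral_sub_const_sq_eq_variance_add
      ((memLp_sum_sq_of_hasLaw_gaussianReal hX).const_mul a), variance_const_mul,
    integral_const_mul, integral_sum_sq_of_hasLaw_gaussianReal hX]
  gcongr
  exact variance_sum_sq_le_of_hasLaw_gaussianReal hX hindep

end SumOfSquares

end ProbabilityTheory

namespace MeasureTheory

lemma tendstoInMeasure_of_tendsto_integral_sq {Ω ι : Type*} [MeasurableSpace Ω] {P : Measure Ω}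
    {l : Filter ι} {f : ι → Ω → ℝ} {g : Ω → ℝ}
    (hf : ∀ i, AEStronglyMeasurable (f i) P) (hg : AEStronglyMeasurable g P)
    (hmem : ∀ᶠ i in l, MemLp (f i - g) 2 P)
    (hlim : Tendsto (fun i => ∫ ω, (f i ω - g ω) ^ 2 ∂P) l (𝓝 0)) :
    TendstoInMeasure P f l g := by
  refine tendstoInMeasure_of_tendsto_eLpNorm two_ne_zero hf hg ?_
  have h : Tendsto (fun i => ENNReal.ofReal ((∫ ω, (f i ω - g ω) ^ 2 ∂P) ^ (2 : ℝ)⁻¹)) l (𝓝 0) := by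
    simpa using ENNReal.tendsto_ofReal
      (((Real.continuous_rpow_const (by norm_num : (0 : ℝ) ≤ 2⁻¹)).tendsto 0).comp hlim)
  refine h.congr' ?_
  filter_upwards [hmem] with i hi
  rw [hi.eLpNorm_eq_integral_rpow_norm two_ne_zero ENNReal.ofNat_ne_top]
  simp

end MeasureTheory

lemma Fintype.sum_comp_eq_of_support_subset_range {ι κ : Type*} [Fintype ι] [Fintype κ]
    {μ : ι → ℝ} {c : κ → ℝ} {e : κ → ι} (he : Function.Injective e) (hμc : ∀ k, μ (e k) = c k)
    (hμ : ∀ i, i ∉ Set.range e → μ i = 0) (g : ℝ → ℝ) (hg : g 0 = 0) :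
    ∑ i, g (μ i) = ∑ k, g (c k) :=
  (Fintype.sum_of_injective e he _ _ (fun i hi => by rw [hμ i hi, hg]) fun k => by rw [hμc]).symm

lemma sum_add_sq_eq_of_support_subset_range {ι κ : Type*} [Fintype ι] [Fintype κ]
    {μ : ι → ℝ} {c : κ → ℝ} {e : κ → ι} (he : Function.Injective e) (hμc : ∀ k, μ (e k) = c k)
    (hμ : ∀ i, i ∉ Set.range e → μ i = 0) (a : ℝ) :
    ∑ i, (a + μ i) ^ 2 = Fintype.card ι * a ^ 2 + 2 * a * ∑ k, c k + ∑ k, c k ^ 2 := by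
  have h1 := Fintype.sum_comp_eq_of_support_subset_range he hμc hμ id rfl
  have h2 := Fintype.sum_comp_eq_of_support_subset_range he hμc hμ (· ^ 2) (zero_pow two_ne_zero)
  simp only [id] at h1 h2
  simp only [add_sq, Finset.sum_add_distrib, Finset.sum_const, Finset.card_univ, nsmul_eq_mul,
    ← Finset.mul_sum, h1, h2]

/-- The bound of `integral_mul_sum_sq_sub_sq_le` for `a = T⁻¹`, `v = θs Δ` and
`∑ m_i² = n (βs Δ)² + 2 βs Δ s₁ + s₂`, where `Δ = T / n`. -/
lemma tendsto_mse_bound {T : ℝ} (hT : T ≠ 0) (βs θs M s₁ s₂ : ℝ) :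
    Tendsto (fun n : ℕ =>
      T⁻¹ ^ 2 * (2 * n * (θs * (T / n)) ^ 2 * M
          + 8 * (θs * (T / n)) * (n * (βs * (T / n)) ^ 2 + 2 * (βs * (T / n)) * s₁ + s₂))
        + (T⁻¹ * (n * (θs * (T / n)) + (n * (βs * (T / n)) ^ 2 + 2 * (βs * (T / n)) * s₁ + s₂))
          - (θs + T⁻¹ * s₂)) ^ 2) atTop (𝓝 0) := by
  set F : ℝ → ℝ := fun Δ => T⁻¹ ^ 2 * (2 * T * θs ^ 2 * Δ * M
      + 8 * θs * Δ * (T * βs ^ 2 * Δ + 2 * βs * Δ * s₁ + s₂))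
    + (βs ^ 2 * Δ + 2 * T⁻¹ * βs * s₁ * Δ) ^ 2
  have hF : Tendsto F (𝓝 0) (𝓝 0) := by simpa [F] using (by fun_prop : Continuous F).tendsto 0
  refine (hF.comp (tendsto_const_div_atTop_nhds_zero_nat T)).congr' ?_
  filter_upwards [eventually_ne_atTop 0] with n hn
  simp only [F, Function.comp]
  field_simp
  ring

theorem mle_consistency_general
    {Ω : Type*} [MeasurableSpace Ω] (P : Measure Ω) [IsProbabilityMeasure P]
    (T βs θs : ℝ) (hT : 0 < T) (hθs : 0 < θs)
    (K : ℕ) (c : Fin K → ℝ)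
    (D : (n : ℕ) → Fin n → Ω → ℝ) (hDmeas : ∀ n i, Measurable (D n i))
    (μf : (n : ℕ) → Fin n → ℝ)
    (hjump : ∀ n, K < n → ∃ jdx : Fin K → Fin n, Function.Injective jdx ∧
      (∀ k, μf n (jdx k) = c k) ∧ ∀ i, i ∉ Set.range jdx → μf n i = 0)
    (hindep : ∀ n, K < n → iIndepFun (D n) P)
    (hdist : ∀ n, K < n → ∀ i : Fin n,
      P.map (D n i) = gaussianReal (βs * (T / n) + μf n i) (Real.toNNReal (θs * (T / n)))) :
    Tendsto (fun n => ∫ ω, (T⁻¹ * ∑ i, (D n i ω) ^ 2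
        - (θs + T⁻¹ * ∑ k, (c k) ^ 2)) ^ 2 ∂P) atTop (nhds 0) ∧
    TendstoInMeasure P (fun n ω => T⁻¹ * ∑ i, (D n i ω) ^ 2) atTop
      (fun _ => θs + T⁻¹ * ∑ k, (c k) ^ 2) := by
  have hlaw : ∀ n, K < n → ∀ i,
      HasLaw (D n i) (gaussianReal (βs * (T / n) + μf n i) (θs * (T / n)).toNNReal) P :=
    fun n hn i => ⟨(hDmeas n i).aemeasurable, hdist n hn i⟩
  have hL2 : Tendsto (fun n => ∫ ω, (T⁻¹ * ∑ i, D n i ω ^ 2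
      - (θs + T⁻¹ * ∑ k, c k ^ 2)) ^ 2 ∂P) atTop (𝓝 0) := by
    refine tendsto_of_tendsto_of_tendsto_of_le_of_le' tendsto_const_nhds
      (tendsto_mse_bound hT.ne' βs θs (∫ x, x ^ 4 ∂gaussianReal 0 1) (∑ k, c k) (∑ k, c k ^ 2))
      (Eventually.of_forall fun n => integral_nonneg fun ω => sq_nonneg _) ?_
    filter_upwards [eventually_gt_atTop K] with n hn
    obtain ⟨jdx, hinj, hval, hzero⟩ := hjump n hn
    have h := integral_mul_sum_sq_sub_sq_le (hlaw n hn) (hindep n hn) T⁻¹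
      (θs + T⁻¹ * ∑ k, c k ^ 2)
    rwa [Real.coe_toNNReal _ (by positivity), Fintype.card_fin,
      sum_add_sq_eq_of_support_subset_range hinj hval hzero, Fintype.card_fin] at h
  refine ⟨hL2, tendstoInMeasure_of_tendsto_integral_sq (fun n => by fun_prop) (by fun_prop) ?_ hL2⟩
  filter_upwards [eventually_gt_atTop K] with n hn
  exact ((memLp_sum_sq_of_hasLaw_gaussianReal (hlaw n hn)).const_mul _).sub (memLp_const _)

/-- **Consistency of the misspecified MLE.**
`θ̂_n = T⁻¹ ∑_i D_i²` converges to `θ† = θ* + T⁻¹ [J]` in `L²` and hence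
in probability as `n → ∞`. -/
theorem mle_consistency
    {Ω : Type*} [MeasurableSpace Ω] (P : Measure Ω) [IsProbabilityMeasure P]
    (T βs θs : ℝ) (hT : 0 < T) (hθs : 0 < θs)
    (K : ℕ) (c : Fin K → ℝ) (hc : ∀ k, c k ≠ 0)
    (D : (n : ℕ) → Fin n → Ω → ℝ) (hDmeas : ∀ n i, Measurable (D n i))
    (μf : (n : ℕ) → Fin n → ℝ)
    (hjump : ∀ n, K < n → ∃ jdx : Fin K → Fin n, Function.Injective jdx ∧
      (∀ k, μf n (jdx k) = c k) ∧ ∀ i, i ∉ Set.range jdx → μf n i = 0)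
    (hindep : ∀ n, K < n → iIndepFun (D n) P)
    (hdist : ∀ n, K < n → ∀ i : Fin n,
      P.map (D n i) = gaussianReal (βs * (T / n) + μf n i) (Real.toNNReal (θs * (T / n)))) :
    Tendsto (fun n => ∫ ω, (T⁻¹ * ∑ i, (D n i ω) ^ 2
        - (θs + T⁻¹ * ∑ k, (c k) ^ 2)) ^ 2 ∂P) atTop (nhds 0) ∧
    TendstoInMeasure P (fun n ω => T⁻¹ * ∑ i, (D n i ω) ^ 2) atTop
      (fun _ => θs + T⁻¹ * ∑ k, (c k) ^ 2) :=
  mle_consistency_general P T βs θs hT hθs K c D hDmeas μf hjump hindep hdist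
end

section
/- (Small-ball bound for jump increments.) Fix T > 0, β ∈ ℝ, θ > 0, m > 0, ω ∈ (0, 1/2), and a fixed c ≠ 0. For each n ≥ 1 let Z_n ~ N(β T/n, θ T/n) and η_n = m n^{-ω}. Then for every k ∈ ℕ, n^k · P( |Z_n + c| ≤ η_n ) → 0 as n → ∞; i.e., the probability that an increment containing a jump of size c falls below the threshold vanishes faster than any polynomial rate. -/
/-!
Once `n` is large, `η_n + |βT/n| ≤ |c|/2`, so by the triangle inequality the event
`|Z_n + c| ≤ η_n` forces `Z_n` to lie at distance at least `|c|/2` from its mean. The Chernoff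
bound for the centred Gaussian `N(0, θT/n)` bounds this by `2 exp(-c² n / (8θT))`, which beats
every power of `n`.
-/

open MeasureTheory ProbabilityTheory Filter Real
open scoped NNReal

lemma half_abs_le_abs_sub_of_abs_add_le {x c μ η : ℝ} (hx : |x + c| ≤ η)
    (hsmall : η + |μ| ≤ |c| / 2) : |c| / 2 ≤ |x - μ| := by
  have htri := abs_add_three (x + c) (-(x - μ)) (-μ)
  rw [abs_neg, abs_neg, show x + c + -(x - μ) + -μ = c by ring] at htri
  linarith

namespace ProbabilityTheory

lemma hasSubgaussianMGF_id_gaussianReal_zero (v : ℝ≥0) :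
    HasSubgaussianMGF id v (gaussianReal 0 v) where
  integrable_exp_mul t := integrable_exp_mul_gaussianReal t
  mgf_le t := by simp [mgf_id_gaussianReal]

lemma hasSubgaussianMGF_sub_gaussianReal (μ : ℝ) (v : ℝ≥0) :
    HasSubgaussianMGF (· - μ) v (gaussianReal μ v) := by
  rw [← HasSubgaussianMGF.id_map_iff (by fun_prop), gaussianReal_map_sub_const, sub_self]
  exact hasSubgaussianMGF_id_gaussianReal_zero v

lemma gaussianReal_real_le_abs_sub_le (μ : ℝ) (v : ℝ≥0) {r : ℝ} (hr : 0 ≤ r) :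
    (gaussianReal μ v).real {x | r ≤ |x - μ|} ≤ 2 * exp (-r ^ 2 / (2 * v)) := by
  have hsplit : {x | r ≤ |x - μ|} = {x | r ≤ x - μ} ∪ {x | r ≤ -(x - μ)} := by
    ext x
    simp only [Set.mem_ofPred_eq, Set.mem_union, le_abs]
  have hX := hasSubgaussianMGF_sub_gaussianReal μ v
  calc (gaussianReal μ v).real {x | r ≤ |x - μ|}
      ≤ (gaussianReal μ v).real {x | r ≤ x - μ} + (gaussianReal μ v).real {x | r ≤ -(x - μ)} :=
        hsplit ▸ measureReal_union_le _ _
    _ ≤ exp (-r ^ 2 / (2 * v)) + exp (-r ^ 2 / (2 * v)) :=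
        add_le_add (hX.measure_ge_le hr) (hX.neg.measure_ge_le hr)
    _ = 2 * exp (-r ^ 2 / (2 * v)) := by ring

lemma gaussianReal_real_abs_add_le_le (μ : ℝ) (v : ℝ≥0) {c η : ℝ}
    (hsmall : η + |μ| ≤ |c| / 2) :
    (gaussianReal μ v).real {x | |x + c| ≤ η} ≤ 2 * exp (-c ^ 2 / (8 * v)) := by
  calc (gaussianReal μ v).real {x | |x + c| ≤ η}
      ≤ (gaussianReal μ v).real {x | |c| / 2 ≤ |x - μ|} :=
        measureReal_mono fun x hx => half_abs_le_abs_sub_of_abs_add_le hx hsmall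
    _ ≤ 2 * exp (-(|c| / 2) ^ 2 / (2 * v)) := gaussianReal_real_le_abs_sub_le μ v (by positivity)
    _ = 2 * exp (-c ^ 2 / (8 * v)) := by
        congr 2
        rw [div_pow, sq_abs]
        ring

end ProbabilityTheory

lemma tendsto_natCast_pow_mul_exp_neg_mul {a : ℝ} (ha : 0 < a) (k : ℕ) :
    Tendsto (fun n : ℕ => (n : ℝ) ^ k * exp (-a * n)) atTop (nhds 0) := by
  simpa [Function.comp_def] using
    (tendsto_rpow_mul_exp_neg_mul_atTop_nhds_zero k a ha).comp tendsto_natCast_atTop_atTop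

theorem jump_increment_small_ball_general
    (T β θ m w : ℝ) (hT : 0 < T) (hθ : 0 < θ)
    (hw : w ∈ Set.Ioo (0 : ℝ) (1 / 2)) (c : ℝ) (hc : c ≠ 0) :
    ∀ k : ℕ, Tendsto (fun n : ℕ => (n : ℝ) ^ k *
        ((gaussianReal (β * T / n) (Real.toNNReal (θ * T / n)))
          {x : ℝ | |x + c| ≤ m * (n : ℝ) ^ (-w)}).toReal)
      atTop (nhds 0) := by
  intro k
  have hθT : 0 < θ * T := mul_pos hθ hT
  have hshrink : Tendsto (fun n : ℕ => m * (n : ℝ) ^ (-w) + |β * T / n|) atTop (nhds 0) := by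
    simpa using
      (((tendsto_rpow_neg_atTop hw.1).comp tendsto_natCast_atTop_atTop).const_mul m).add
        (tendsto_const_div_atTop_nhds_zero_nat (β * T)).abs
  have hsmall := hshrink.eventually (ge_mem_nhds (by positivity : (0 : ℝ) < |c| / 2))
  have hdominant : Tendsto (fun n : ℕ => 2 * ((n : ℝ) ^ k * exp (-(c ^ 2 / (8 * (θ * T))) * n)))
      atTop (nhds 0) := by
    simpa using (tendsto_natCast_pow_mul_exp_neg_mul (by positivity) k).const_mul 2
  refine squeeze_zero' (Eventually.of_forall fun n => by positivity) ?_ hdominant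
  filter_upwards [hsmall, eventually_gt_atTop 0] with n hn hn0
  have hv : ((θ * T / n).toNNReal : ℝ) = θ * T / n := Real.coe_toNNReal _ (by positivity)
  have hexp : -c ^ 2 / (8 * (θ * T / n)) = -(c ^ 2 / (8 * (θ * T))) * n := by
    field_simp
  calc (n : ℝ) ^ k * (gaussianReal (β * T / n) (θ * T / n).toNNReal).real
        {x | |x + c| ≤ m * (n : ℝ) ^ (-w)}
      ≤ (n : ℝ) ^ k * (2 * exp (-c ^ 2 / (8 * (θ * T / n)))) := by
        gcongr
        simpa only [hv] using gaussianReal_real_abs_add_le_le _ (θ * T / n).toNNReal hn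
    _ = 2 * ((n : ℝ) ^ k * exp (-(c ^ 2 / (8 * (θ * T))) * n)) := by rw [hexp]; ring

/-- **Small-ball bound for jump increments.**
For `Z_n ~ N(β T/n, θ T/n)`, a fixed jump size `c ≠ 0`, and threshold `η_n = m n^{-w}`
with `0 < w < 1/2`, the probability `P(|Z_n + c| ≤ η_n)` that an increment containing a
jump falls below the threshold vanishes faster than any polynomial rate. -/
theorem jump_increment_small_ball
    (T β θ m w : ℝ) (hT : 0 < T) (hθ : 0 < θ) (hm : 0 < m)
    (hw : w ∈ Set.Ioo (0 : ℝ) (1 / 2)) (c : ℝ) (hc : c ≠ 0) :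
    ∀ k : ℕ, Tendsto (fun n : ℕ => (n : ℝ) ^ k *
        ((gaussianReal (β * T / n) (Real.toNNReal (θ * T / n)))
          {x : ℝ | |x + c| ≤ m * (n : ℝ) ^ (-w)}).toReal)
      atTop (nhds 0) :=
  jump_increment_small_ball_general T β θ m w hT hθ hw c hc
end
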